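/- arXiv:1811.10743 — 4 statements merged into one kernel-verified Lean document; each statement's English description precedes it below -/
import Mathlib

section
/- Let q, κ ∈ ℂ and let (x,y) ∈ ℂ² satisfy the Hesse cubic equation x³ + 1 + y³ + q·x·y = 0 together with 3y + 3 − q·x ≠ 0. Define U = −(κ²/3)·(108x + q³x + 9q²y + 9q²) / (4^{1/3}·(3y + 3 − q·x)) and V = −4(q³ + 27)·κ³·(3y² − q·x·y + q·x − 3) / (3y + 3 − q·x)². Then V² = 4U³ − g₂·U − g₃, where g₂ = (κ⁴·4^{1/3}/3)·(q⁴ − 216q) and g₃ = κ⁶·(−(2/27)q⁶ − 40q³ + 432). -/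
/-!
On the Hesse cubic the numerator of `V` factors as `3y² − qxy + qx − 3 = (y − 1)(3y + 3 − qx)`,
so `V = −4(q³ + 27)κ³(y − 1)/(3y + 3 − qx)`. Writing `U = u / ∛4` and `g₂ = ∛4 · g`, the cube
root drops out of `4U³ − g₂U = u³ − g u`, and the remaining identity
`v² = u³ − g u − g₃` becomes, once denominators are cleared, `1728 (q³ + 27)²` times the Hesse
equation.
-/

theorem real_cbrt_four_cube : (((4 : ℝ) ^ ((1 : ℝ) / 3) : ℝ) : ℂ) ^ 3 = 4 := by
  rw [one_div]
  exact_mod_cast Real.rpow_inv_natCast_pow (by norm_num : (0 : ℝ) ≤ 4) (by norm_num : 3 ≠ 0)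

theorem four_mul_div_cube_sub_of_cube_eq_four {K : Type*} [Field K] {c : K} (hc : c ^ 3 = 4)
    (hc0 : c ≠ 0) (u g : K) : 4 * (u / c) ^ 3 - c * g * (u / c) = u ^ 3 - g * u := by
  rw [div_pow, hc, mul_div_cancel₀ _ (by simpa [hc] using pow_ne_zero 3 hc0), mul_right_comm,
    mul_div_cancel₀ _ hc0, mul_comm u]

theorem hesse_sq_eq_cube_sub {K : Type*} [Field K] [CharZero K] {q x y : K} (κ : K)
    (hcurve : x ^ 3 + 1 + y ^ 3 + q * x * y = 0) (hden : 3 * y + 3 - q * x ≠ 0) :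
    (-4 * (q ^ 3 + 27) * κ ^ 3 * (y - 1) / (3 * y + 3 - q * x)) ^ 2 =
      (-(κ ^ 2 / 3) * (108 * x + q ^ 3 * x + 9 * q ^ 2 * y + 9 * q ^ 2) / (3 * y + 3 - q * x)) ^ 3
      - κ ^ 4 / 3 * (q ^ 4 - 216 * q) *
        (-(κ ^ 2 / 3) * (108 * x + q ^ 3 * x + 9 * q ^ 2 * y + 9 * q ^ 2) / (3 * y + 3 - q * x))
      - κ ^ 6 * (-(2 / 27) * q ^ 6 - 40 * q ^ 3 + 432) := by
  -- `field_simp` rewrites `3 * y + 3` as `3 * (y + 1)`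
  have hden' : 3 * (y + 1) - q * x ≠ 0 := by rwa [mul_add, mul_one]
  field_simp
  linear_combination 46656 * κ ^ 6 * (q ^ 3 + 27) ^ 2 * hcurve

/-- If `(x, y)` lies on the Hesse cubic `x³ + 1 + y³ + q·x·y = 0` and
`3y + 3 − qx ≠ 0`, then the inverse uniformization map `(x, y) ↦ (U, V)` lands on the
Weierstrass normal form `V² = 4U³ − g₂U − g₃`.  Here `4^(1/3)` is the real cube root of `4`. -/
theorem stmt_0 (q κ x y : ℂ)
    (hcurve : x ^ 3 + 1 + y ^ 3 + q * x * y = 0)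
    (hden : 3 * y + 3 - q * x ≠ 0) :
    let c : ℂ := ((4 : ℝ) ^ ((1 : ℝ) / 3) : ℝ)
    let U : ℂ := -(κ ^ 2 / 3) * (108 * x + q ^ 3 * x + 9 * q ^ 2 * y + 9 * q ^ 2) /
      (c * (3 * y + 3 - q * x))
    let V : ℂ := -4 * (q ^ 3 + 27) * κ ^ 3 * (3 * y ^ 2 - q * x * y + q * x - 3) /
      (3 * y + 3 - q * x) ^ 2
    let g₂ : ℂ := κ ^ 4 * c / 3 * (q ^ 4 - 216 * q)
    let g₃ : ℂ := κ ^ 6 * (-(2 / 27) * q ^ 6 - 40 * q ^ 3 + 432)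
    V ^ 2 = 4 * U ^ 3 - g₂ * U - g₃ := by
  intro c U V g₂ g₃
  have hc : c ^ 3 = 4 := real_cbrt_four_cube
  have hc0 : c ≠ 0 := by rintro h; norm_num [h] at hc
  have hU : U = -(κ ^ 2 / 3) * (108 * x + q ^ 3 * x + 9 * q ^ 2 * y + 9 * q ^ 2) /
      (3 * y + 3 - q * x) / c := by
    rw [div_div, mul_comm _ c]
  have hg₂ : g₂ = c * (κ ^ 4 / 3 * (q ^ 4 - 216 * q)) := by ring
  have hV : V = -4 * (q ^ 3 + 27) * κ ^ 3 * (y - 1) / (3 * y + 3 - q * x) := by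
    have hnum : 3 * y ^ 2 - q * x * y + q * x - 3 = (y - 1) * (3 * y + 3 - q * x) := by ring
    rw [div_eq_div_iff (pow_ne_zero 2 hden) hden, hnum]
    ring
  rw [hU, hg₂, hV, four_mul_div_cube_sub_of_cube_eq_four hc hc0]
  exact hesse_sq_eq_cube_sub κ hcurve hden
end

section
/- Let q ∈ ℂ with 27 + q³ ≠ 0, and set g₂ = (4^{1/3}/3)·(q⁴ − 216q) and g₃ = −(2/27)q⁶ − 40q³ + 432 (i.e. κ = 1). Consider the Weierstrass curve W over ℂ given by y² = x³ + a₄x + a₆ with a₁ = a₂ = a₃ = 0, a₄ = −g₂/4, a₆ = −g₃/4. Then the discriminant Δ of W is nonzero, so W is an elliptic curve, and its j-invariant equals −q³·(q³ − 216)³ / (27 + q³)³. -/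
/-!
With `c³ = 4` the coefficient `a₄ = -c q (q³ - 216) / 12` has `a₄³ = -q³ (q³ - 216)³ / 432`, so the
short-form quantities `4 a₄³ + 27 a₆²` and `a₄³` become polynomials in `q` alone; the first one
factors as `16 (27 + q³)³`, and the j-invariant `6912 a₄³ / (4 a₄³ + 27 a₆²)` of a curve in short
normal form is then the claimed rational function of `q`.
-/

namespace WeierstrassCurve

variable {F : Type*} [Field F]

/-- `c` stands for a cube root of `4`. -/
def hesse (c q : F) : WeierstrassCurve F :=
  { a₁ := 0, a₂ := 0, a₃ := 0,
    a₄ := -(c / 3 * (q ^ 4 - 216 * q)) / 4,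
    a₆ := -(-(2 / 27) * q ^ 6 - 40 * q ^ 3 + 432) / 4 }

instance (c q : F) : (hesse c q).IsShortNF := ⟨rfl, rfl, rfl⟩

variable [CharZero F] {c : F} (q : F)

theorem hesse_a₄_pow_three (hc : c ^ 3 = 4) :
    (hesse c q).a₄ ^ 3 = -q ^ 3 * (q ^ 3 - 216) ^ 3 / 432 := by
  simp only [hesse]
  linear_combination (-(q ^ 4 - 216 * q) ^ 3 / 1728) * hc

theorem hesse_shortDisc (hc : c ^ 3 = 4) :
    4 * (hesse c q).a₄ ^ 3 + 27 * (hesse c q).a₆ ^ 2 = 16 * (27 + q ^ 3) ^ 3 := by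
  rw [hesse_a₄_pow_three q hc]
  simp only [hesse]
  ring

theorem hesse_Δ (hc : c ^ 3 = 4) : (hesse c q).Δ = -256 * (27 + q ^ 3) ^ 3 := by
  rw [Δ_of_isShortNF, hesse_shortDisc q hc]
  ring

theorem hesse_j (hc : c ^ 3 = 4) (hq : 27 + q ^ 3 ≠ 0) [(hesse c q).IsElliptic] :
    (hesse c q).j = -q ^ 3 * (q ^ 3 - 216) ^ 3 / (27 + q ^ 3) ^ 3 := by
  rw [j_of_isShortNF, hesse_shortDisc q hc, hesse_a₄_pow_three q hc]
  field_simp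
  ring

end WeierstrassCurve

theorem real_cbrt_four_pow_three : ((4 : ℝ) ^ ((1 : ℝ) / 3)) ^ 3 = 4 := by
  rw [one_div]
  exact_mod_cast Real.rpow_inv_natCast_pow (by norm_num : (0 : ℝ) ≤ 4) three_ne_zero

/-- For `q ∈ ℂ` with `27 + q³ ≠ 0`, and `g₂ = (4^(1/3)/3)(q⁴ − 216q)`,
`g₃ = −(2/27)q⁶ − 40q³ + 432` (i.e. `κ = 1`), the Weierstrass curve
`y² = x³ − (g₂/4)x − (g₃/4)` has nonzero discriminant, hence is an elliptic curve,
and its j-invariant equals `−q³(q³ − 216)³/(27 + q³)³`.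
Here `4^(1/3)` is the real cube root of `4`. -/
theorem stmt_2 (q : ℂ) (hq : 27 + q ^ 3 ≠ 0) :
    let c : ℂ := ((4 : ℝ) ^ ((1 : ℝ) / 3) : ℝ)
    let g₂ : ℂ := c / 3 * (q ^ 4 - 216 * q)
    let g₃ : ℂ := -(2 / 27) * q ^ 6 - 40 * q ^ 3 + 432
    let W : WeierstrassCurve ℂ :=
      { a₁ := 0, a₂ := 0, a₃ := 0, a₄ := -g₂ / 4, a₆ := -g₃ / 4 }
    W.Δ ≠ 0 ∧
      ∀ _ : W.IsElliptic, W.j = -q ^ 3 * (q ^ 3 - 216) ^ 3 / (27 + q ^ 3) ^ 3 := by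
  intro c _ _ W
  have hc : c ^ 3 = 4 := by
    rw [← Complex.ofReal_pow, real_cbrt_four_pow_three, Complex.ofReal_ofNat]
  change (WeierstrassCurve.hesse c q).Δ ≠ 0 ∧
    ∀ _ : (WeierstrassCurve.hesse c q).IsElliptic, (WeierstrassCurve.hesse c q).j = _
  rw [WeierstrassCurve.hesse_Δ q hc]
  exact ⟨mul_ne_zero (by norm_num) (pow_ne_zero 3 hq),
    fun _ => WeierstrassCurve.hesse_j q hc hq⟩
end

section
/- Let q ∈ ℂ with q ≠ 0 and 27 + q³ ≠ 0. Then the set of pairs (X,Y) ∈ ℂ² satisfying both X³ + Y³ + Y⁶ + q·X·Y³ = 0 and 1 + 2Y³ + q·X = 0 has exactly 9 elements. -/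
/-!
Solving the second equation for `X = -(1 + 2Y³)/q` and substituting into the first, `-q³` times
the first equation becomes `P(Y) = 8Y⁹ + (12 + q³)Y⁶ + 6Y³ + 1`, so the solutions correspond
bijectively to the roots of `P`. Since `P' = Y² · (72Y⁶ + 6(12 + q³)Y³ + 18)`, `P(0) = 1`, and an
explicit Bézout relation between `P` and the second factor has constant `6q³(27 + q³)`, the
polynomial `P` is separable; having degree `9`, it has `9` distinct roots.
-/

open Polynomial

theorem isCoprime_of_isUnit_add_mul {R : Type*} [CommSemiring R] {a b x y : R}
    (h : IsUnit (a * x + b * y)) : IsCoprime x y := by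
  obtain ⟨u, hu⟩ := h
  exact ⟨↑u⁻¹ * a, ↑u⁻¹ * b, by rw [mul_assoc, mul_assoc, ← mul_add, ← hu, Units.inv_mul]⟩

section RamificationPoly

variable {R : Type*} [CommRing R]

/-- The cubic `8s³ + (12 + q³)s² + 6s + 1` of the paper, evaluated at `s = Y³`. -/
noncomputable def ramificationPoly (q : R) : R[X] :=
  C 8 * X ^ 9 + C (12 + q ^ 3) * X ^ 6 + C 6 * X ^ 3 + 1

@[simp]
theorem eval_ramificationPoly (q y : R) :
    (ramificationPoly q).eval y = 8 * y ^ 9 + (12 + q ^ 3) * y ^ 6 + 6 * y ^ 3 + 1 := by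
  simp [ramificationPoly]

theorem derivative_ramificationPoly (q : R) :
    derivative (ramificationPoly q) =
      X ^ 2 * (C 72 * X ^ 6 + C (6 * (12 + q ^ 3)) * X ^ 3 + C 18) := by
  simp only [ramificationPoly, derivative_add, derivative_C_mul_X_pow, derivative_one, add_zero]
  simp only [map_mul, map_add, map_pow, map_natCast, map_ofNat]
  push_cast
  ring

theorem ramificationPoly_bezout (q : R) :
    (C (6 * (q ^ 6 + 36 * q ^ 3 + 252)) + C (72 * (24 + q ^ 3)) * X ^ 3) * ramificationPoly q +
      (C (-3 * (q ^ 3 + 28)) + C (-(q ^ 6 + 36 * q ^ 3 + 264)) * X ^ 3 +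
          C (-8 * (24 + q ^ 3)) * X ^ 6) *
        (C 72 * X ^ 6 + C (6 * (12 + q ^ 3)) * X ^ 3 + C 18) =
      C (6 * q ^ 3 * (27 + q ^ 3)) := by
  simp only [ramificationPoly, map_mul, map_add, map_neg, map_pow, map_ofNat]
  ring

theorem isCoprime_ramificationPoly_X (q : R) : IsCoprime (ramificationPoly q) X :=
  ⟨1, -(C 8 * X ^ 8 + C (12 + q ^ 3) * X ^ 5 + C 6 * X ^ 2), by rw [ramificationPoly]; ring⟩

end RamificationPoly

section Field

variable {K : Type*} [Field K]

theorem natDegree_ramificationPoly [CharZero K] (q : K) : (ramificationPoly q).natDegree = 9 := by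
  unfold ramificationPoly
  compute_degree!

theorem separable_ramificationPoly [CharZero K] {q : K} (hq : q ≠ 0) (hq' : 27 + q ^ 3 ≠ 0) :
    (ramificationPoly q).Separable := by
  have hcop : IsCoprime (ramificationPoly q)
      (C 72 * X ^ 6 + C (6 * (12 + q ^ 3)) * X ^ 3 + C 18) := by
    refine isCoprime_of_isUnit_add_mul (ramificationPoly_bezout q ▸ isUnit_C.mpr ?_)
    simp [hq, hq']
  rw [Polynomial.Separable, derivative_ramificationPoly]
  exact ((isCoprime_ramificationPoly_X q).pow_right).mul_right hcop

theorem setOf_solutions_eq_image_roots_ramificationPoly {q : K} (hq : q ≠ 0) :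
    {p : K × K |
        p.1 ^ 3 + p.2 ^ 3 + p.2 ^ 6 + q * p.1 * p.2 ^ 3 = 0 ∧
          1 + 2 * p.2 ^ 3 + q * p.1 = 0} =
      (fun y : K => (-(1 + 2 * y ^ 3) / q, y)) '' {y | (ramificationPoly q).IsRoot y} := by
  ext ⟨x, y⟩
  simp only [Set.mem_ofPred_eq, Set.mem_image, IsRoot.def, eval_ramificationPoly, Prod.mk.injEq]
  constructor
  · rintro ⟨hH, hX⟩
    refine ⟨y, ?_, ?_, rfl⟩
    · -- `q³x³ + (1 + 2y³)³` is divisible by `qx + (1 + 2y³)`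
      linear_combination -(q ^ 3) * hH +
        (q ^ 2 * x ^ 2 - q * x * (1 + 2 * y ^ 3) + (1 + 2 * y ^ 3) ^ 2 + q ^ 3 * y ^ 3) * hX
    · field_simp
      linear_combination -hX
  · rintro ⟨y, hP, rfl, rfl⟩
    constructor
    · field_simp
      linear_combination -hP
    · field_simp
      ring

theorem ncard_setOf_isRoot_ramificationPoly [CharZero K] [IsAlgClosed K] {q : K} (hq : q ≠ 0)
    (hq' : 27 + q ^ 3 ≠ 0) : {y | (ramificationPoly q).IsRoot y}.ncard = 9 := by
  have hne : ramificationPoly q ≠ 0 := by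
    intro h
    simpa [h] using natDegree_ramificationPoly q
  have hroots : {y | (ramificationPoly q).IsRoot y} = (ramificationPoly q).rootSet K := by
    ext y
    simp [mem_rootSet_of_ne hne]
  rw [hroots, ← Nat.card_coe_set_eq, Nat.card_eq_fintype_card,
    card_rootSet_eq_natDegree (separable_ramificationPoly hq hq') (IsAlgClosed.splits _),
    natDegree_ramificationPoly]

end Field

/-- For `q ≠ 0` with `27 + q³ ≠ 0`, the system
`X³ + Y³ + Y⁶ + qXY³ = 0`, `1 + 2Y³ + qX = 0` has exactly `9` solutions
`(X, Y) ∈ ℂ²` (the nine ramification points). -/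
theorem stmt_5 (q : ℂ) (hq : q ≠ 0) (hq' : 27 + q ^ 3 ≠ 0) :
    {p : ℂ × ℂ |
        p.1 ^ 3 + p.2 ^ 3 + p.2 ^ 6 + q * p.1 * p.2 ^ 3 = 0 ∧
          1 + 2 * p.2 ^ 3 + q * p.1 = 0}.ncard = 9 := by
  rw [setOf_solutions_eq_image_roots_ramificationPoly hq,
    Set.ncard_image_of_injective _ fun _ _ h => congrArg Prod.snd h]
  exact ncard_setOf_isRoot_ramificationPoly hq hq'
end

section
/- Let q ∈ ℂ satisfy 27 + q³ ≠ 0 and q¹²/864 + q⁹/12 + 2q⁶ + 17q³ + 27 ≠ 0. Then every (X,Y) ∈ ℂ² with X³ + Y³ + Y⁶ + q·X·Y³ = 0 and 1 + 2Y³ + q·X = 0 satisfies −12X² + 2q²X + 2q ≠ 0. -/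
/-!
Substituting `Y³ = -(1 + qX)/2` into the curve equation shows that the abscissa of a ramification
point is a root of `f(X) = 4X³ - (1 + qX)²`, and `-12X² + 2q²X + 2q` is `-f'(X)`. A double root of
`f` forces `9X = q²` and `q = -3X²`, hence `X³ = 1` and `q³ = -27`.
-/

variable {R : Type*} [CommRing R]

def IsRamificationPoint (q X Y : R) : Prop :=
  X ^ 3 + Y ^ 3 + Y ^ 6 + q * X * Y ^ 3 = 0 ∧ 1 + 2 * Y ^ 3 + q * X = 0

theorem IsRamificationPoint.four_mul_pow_three_eq_sq {q X Y : R} (h : IsRamificationPoint q X Y) :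
    4 * X ^ 3 = (1 + q * X) ^ 2 := by
  linear_combination 4 * h.1 - (1 + 2 * Y ^ 3 + q * X) * h.2

theorem pow_three_eq_neg_27_of_double_root [IsDomain R] (h2 : (2 : R) ≠ 0) (h3 : (3 : R) ≠ 0)
    {q X : R} (hf : 4 * X ^ 3 = (1 + q * X) ^ 2) (hf' : 6 * X ^ 2 = q ^ 2 * X + q) :
    q ^ 3 = -27 := by
  have hX : X ≠ 0 := by
    rintro rfl
    simp at hf
  have h4 : (4 : R) ≠ 0 := by convert mul_ne_zero h2 h2 using 1; norm_num
  have h9 : (9 : R) ≠ 0 := by convert mul_ne_zero h3 h3 using 1; norm_num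
  have hX9 : 9 * X = q ^ 2 := by
    have : 4 * X ^ 3 * (9 * X - q ^ 2) = 0 := by
      linear_combination (-q ^ 2) * hf + (6 * X ^ 2 + q ^ 2 * X + q) * hf'
    exact sub_eq_zero.mp ((mul_eq_zero.mp this).resolve_left (mul_ne_zero h4 (pow_ne_zero 3 hX)))
  have hq : q = -3 * X ^ 2 := by linear_combination X * hX9 - hf'
  have hX3 : X ^ 3 = 1 := by
    have : 9 * X * (X ^ 3 - 1) = 0 := by linear_combination -hX9 - (q - 3 * X ^ 2) * hq
    exact sub_eq_zero.mp ((mul_eq_zero.mp this).resolve_left (mul_ne_zero h9 hX))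
  linear_combination (q ^ 2 - 3 * q * X ^ 2 + 9 * X ^ 4) * hq - 27 * (X ^ 3 + 1) * hX3

theorem stmt_7_general (q : ℂ) (h1 : 27 + q ^ 3 ≠ 0) :
    ∀ X Y : ℂ,
      X ^ 3 + Y ^ 3 + Y ^ 6 + q * X * Y ^ 3 = 0 →
      1 + 2 * Y ^ 3 + q * X = 0 →
      -12 * X ^ 2 + 2 * q ^ 2 * X + 2 * q ≠ 0 := by
  intro X Y hH hY hc
  have hf := IsRamificationPoint.four_mul_pow_three_eq_sq ⟨hH, hY⟩
  have hq := pow_three_eq_neg_27_of_double_root two_ne_zero three_ne_zero hf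
    (by linear_combination (-1 / 2 : ℂ) * hc)
  exact h1 (by linear_combination hq)

/-- If `27 + q³ ≠ 0` and `q¹²/864 + q⁹/12 + 2q⁶ + 17q³ + 27 ≠ 0`,
then at every ramification point `(X, Y)` (i.e. every common solution of
`X³ + Y³ + Y⁶ + qXY³ = 0` and `1 + 2Y³ + qX = 0`) one has
`−12X² + 2q²X + 2q ≠ 0`. -/
theorem stmt_7 (q : ℂ) (h1 : 27 + q ^ 3 ≠ 0)
    (h2 : q ^ 12 / 864 + q ^ 9 / 12 + 2 * q ^ 6 + 17 * q ^ 3 + 27 ≠ 0) :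
    ∀ X Y : ℂ,
      X ^ 3 + Y ^ 3 + Y ^ 6 + q * X * Y ^ 3 = 0 →
      1 + 2 * Y ^ 3 + q * X = 0 →
      -12 * X ^ 2 + 2 * q ^ 2 * X + 2 * q ≠ 0 :=
  stmt_7_general q h1
end
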